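/- One-step error recursion for the pure greedy/orthogonal greedy algorithm: in a Hilbert space, if g maximizes \langle g, r \rangle over a unit-norm dictionary D and \varphi - \varphi_{n-1} = r with \varphi \in L_1(D), then \langle g, r \rangle \geq \|r\|^2 / \|\varphi\|_{L_1(D)}, and hence \|r - \langle g, r\rangle g\|^2 \leq \|r\|^2 (1 - \|r\|^2/\|\varphi\|_{L_1(D)}^2). -/

import Mathlib

/-!
Expanding `φ = ∑ cₖ gₖ` and testing against `r` gives `‖r‖² = ⟪φ, r⟫ ≤ (∑ |cₖ|) ⟪g, r⟫`,
because the symmetry of the dictionary turns maximality of `⟪g, r⟫` into `|⟪h, r⟫| ≤ ⟪g, r⟫`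
for every `h ∈ D`. Taking the infimum over all expansions gives the first bound; the second
follows from Pythagoras for the unit vector `g`.
-/

open scoped RealInnerProductSpace

section

variable {V : Type*} [NormedAddCommGroup V] [InnerProductSpace ℝ V]

theorem abs_inner_le_of_forall_inner_le {D : Set V} (hDsymm : ∀ h ∈ D, -h ∈ D) {g r : V}
    (hmax : ∀ h ∈ D, ⟪h, r⟫ ≤ ⟪g, r⟫) : ∀ h ∈ D, |⟪h, r⟫| ≤ ⟪g, r⟫ := by
  intro h hh
  have hneg := hmax (-h) (hDsymm h hh)
  rw [inner_neg_left] at hneg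
  exact abs_le.2 ⟨by linarith, hmax h hh⟩

theorem HasSum.inner_le_tsum_abs_mul {ι : Type*} {gs : ι → V} {c : ι → ℝ} {φ r : V} {a : ℝ}
    (hc : Summable fun k => |c k|) (hφ : HasSum (fun k => c k • gs k) φ)
    (hbound : ∀ k, |⟪gs k, r⟫| ≤ a) : ⟪φ, r⟫ ≤ (∑' k, |c k|) * a := by
  have hinner : HasSum (fun k => c k * ⟪gs k, r⟫) ⟪φ, r⟫ := by
    simpa only [innerSL_apply_apply, real_inner_smul_right, real_inner_comm r] using
      hφ.mapL (innerSL ℝ r)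
  have hterm : ∀ k, c k * ⟪gs k, r⟫ ≤ |c k| * a := fun k =>
    calc c k * ⟪gs k, r⟫ ≤ |c k * ⟪gs k, r⟫| := le_abs_self _
      _ = |c k| * |⟪gs k, r⟫| := abs_mul _ _
      _ ≤ |c k| * a := mul_le_mul_of_nonneg_left (hbound k) (abs_nonneg _)
  calc ⟪φ, r⟫ = ∑' k, c k * ⟪gs k, r⟫ := hinner.tsum_eq.symm
    _ ≤ ∑' k, |c k| * a := hinner.summable.tsum_le_tsum hterm (hc.mul_right a)
    _ = (∑' k, |c k|) * a := tsum_mul_right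

theorem norm_sub_inner_smul_sq {g : V} (hg : ‖g‖ = 1) (r : V) :
    ‖r - ⟪g, r⟫ • g‖ ^ 2 = ‖r‖ ^ 2 - ⟪g, r⟫ ^ 2 := by
  rw [norm_sub_sq_real, real_inner_smul_right, norm_smul, hg, real_inner_comm r g,
    Real.norm_eq_abs, mul_one, sq_abs]
  ring

end

theorem div_sInf_le_of_forall_le_mul {S : Set ℝ} (hne : S.Nonempty) {x a : ℝ} (hx : 0 ≤ x)
    (ha : 0 ≤ a) (h : ∀ M ∈ S, x ≤ M * a) : x / sInf S ≤ a := by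
  rcases hx.eq_or_lt with rfl | hx
  · simpa using ha
  obtain ⟨M, hM⟩ := hne
  have ha : 0 < a := ha.lt_of_ne <| by
    rintro rfl
    linarith [h M hM]
  have hinf : x / a ≤ sInf S := le_csInf ⟨M, hM⟩ fun M hM => (div_le_iff₀ ha).2 (h M hM)
  have hpos : 0 < sInf S := (div_pos hx ha).trans_le hinf
  rw [div_le_iff₀ hpos]
  rw [div_le_iff₀ ha] at hinf
  linarith

theorem stmt13_general {V : Type*} [NormedAddCommGroup V] [InnerProductSpace ℝ V]
    (D : Set V) (hD : ∀ h ∈ D, ‖h‖ = 1) (hDsymm : ∀ h ∈ D, -h ∈ D)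
    (φ r : V) (hperp : (inner ℝ r (φ - r) : ℝ) = 0)
    (S : Set ℝ)
    (hS : S = {M | ∃ (gs : ℕ → V) (c : ℕ → ℝ), (∀ k, gs k ∈ D) ∧
      Summable (fun k => |c k|) ∧ HasSum (fun k => c k • gs k) φ ∧ M = ∑' k, |c k|})
    (hne : S.Nonempty)
    (g : V) (hg : g ∈ D) (hmax : ∀ h ∈ D, (inner ℝ h r : ℝ) ≤ inner ℝ g r) :
    ‖r‖ ^ 2 / sInf S ≤ (inner ℝ g r : ℝ) ∧
      ‖r - (inner ℝ g r : ℝ) • g‖ ^ 2 ≤ ‖r‖ ^ 2 * (1 - ‖r‖ ^ 2 / (sInf S) ^ 2) := by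
  have hbound := abs_inner_le_of_forall_inner_le hDsymm hmax
  have hgr : 0 ≤ ⟪g, r⟫ := (abs_nonneg _).trans (hbound g hg)
  have hφr : ⟪φ, r⟫ = ‖r‖ ^ 2 := by
    rw [inner_sub_right, real_inner_self_eq_norm_sq, real_inner_comm] at hperp
    linarith
  have hK : 0 ≤ sInf S := Real.sInf_nonneg <| by
    rw [hS]
    rintro _ ⟨-, c, -, -, -, rfl⟩
    exact tsum_nonneg fun k => abs_nonneg (c k)
  have hfirst : ‖r‖ ^ 2 / sInf S ≤ ⟪g, r⟫ := by
    refine div_sInf_le_of_forall_le_mul hne (sq_nonneg _) hgr ?_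
    rw [hS]
    rintro _ ⟨gs, c, hgs, hc, hsum, rfl⟩
    rw [← hφr]
    exact hsum.inner_le_tsum_abs_mul hc fun k => hbound _ (hgs k)
  refine ⟨hfirst, ?_⟩
  calc ‖r - ⟪g, r⟫ • g‖ ^ 2 = ‖r‖ ^ 2 - ⟪g, r⟫ ^ 2 := norm_sub_inner_smul_sq (hD g hg) r
    _ ≤ ‖r‖ ^ 2 - (‖r‖ ^ 2 / sInf S) ^ 2 := by gcongr
    _ = ‖r‖ ^ 2 * (1 - ‖r‖ ^ 2 / sInf S ^ 2) := by ring

/-- One-step greedy recursion: if `r = φ - φ_{n-1}` is the residual of an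
orthogonal projection (so `⟨r, φ - r⟩ = 0`), `φ ∈ L₁(D)` with variation norm
`K = sInf S`, and `g ∈ D` maximizes `⟨·, r⟩` over the symmetric unit-norm dictionary
`D`, then `⟨g, r⟩ ≥ ‖r‖²/K` and `‖r - ⟨g, r⟩ g‖² ≤ ‖r‖² (1 - ‖r‖²/K²)`. -/
theorem stmt13 {V : Type*} [NormedAddCommGroup V] [InnerProductSpace ℝ V]
    [CompleteSpace V]
    (D : Set V) (hD : ∀ h ∈ D, ‖h‖ = 1) (hDsymm : ∀ h ∈ D, -h ∈ D)
    (φ r : V) (hperp : (inner ℝ r (φ - r) : ℝ) = 0)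
    (S : Set ℝ)
    (hS : S = {M | ∃ (gs : ℕ → V) (c : ℕ → ℝ), (∀ k, gs k ∈ D) ∧
      Summable (fun k => |c k|) ∧ HasSum (fun k => c k • gs k) φ ∧ M = ∑' k, |c k|})
    (hne : S.Nonempty)
    (g : V) (hg : g ∈ D) (hmax : ∀ h ∈ D, (inner ℝ h r : ℝ) ≤ inner ℝ g r) :
    ‖r‖ ^ 2 / sInf S ≤ (inner ℝ g r : ℝ) ∧
      ‖r - (inner ℝ g r : ℝ) • g‖ ^ 2 ≤ ‖r‖ ^ 2 * (1 - ‖r‖ ^ 2 / (sInf S) ^ 2) :=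
  stmt13_general D hD hDsymm φ r hperp S hS hne g hg hmax
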